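/- Suppose the infimum z^OPT is attained at some (β^OPT, β₀^OPT) ∈ ℝ^p × ℝ, and let I^OPT = { i ∈ {1,…,m} : X_iᵀβ^OPT + β₀^OPT > 0 }. Then z^σ(I^OPT) = z^OPT; in particular there exists a subset I ⊆ {1,…,m} with z^σ(I) = z^OPT. -/

import Mathlib

/-- `σ(x, y) = (x - y)²` if `x > 2y`, and `σ(x, y) = y²` if `x ≤ 2y`. -/
noncomputable def sigmaFn (x y : ℝ) : ℝ := if x > 2 * y then (x - y) ^ 2 else y ^ 2

/-!
The ReLU loss `(max 0 t - y)²` of a target `y ≥ 0` is bounded by the linear loss `(t - y)²`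
and by `σ(t, y)`, with equality in the first bound when `t > 0` and in the second when `t ≤ 0`.
Hence `F ≤ f^σ_I` pointwise for every `I ⊆ {1,…,m}`, and for `I = I^OPT` the two agree at the
minimiser of `F`; so `f^σ_{I^OPT}` attains its infimum there, with value `z^OPT`.
-/

open Finset

lemma sq_max_zero_sub_le_sq_sub {t y : ℝ} (hy : 0 ≤ y) : (max 0 t - y) ^ 2 ≤ (t - y) ^ 2 := by
  rcases le_or_gt t 0 with ht | ht
  · rw [max_eq_left ht]; nlinarith
  · rw [max_eq_right ht.le]

lemma sq_max_zero_sub_le_sigmaFn {t y : ℝ} (hy : 0 ≤ y) : (max 0 t - y) ^ 2 ≤ sigmaFn t y := by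
  unfold sigmaFn
  split_ifs with h
  · exact sq_max_zero_sub_le_sq_sub hy
  · rcases le_or_gt t 0 with ht | ht
    · rw [max_eq_left ht]; nlinarith
    · rw [max_eq_right ht.le]; nlinarith

lemma sigmaFn_eq_sq_max_zero_sub_of_nonpos {t y : ℝ} (ht : t ≤ 0) (hy : 0 ≤ y) :
    sigmaFn t y = (max 0 t - y) ^ 2 := by
  rw [sigmaFn, if_neg (by linarith), max_eq_left ht]
  ring

lemma sum_Icc_one_eq_sum_add_sum_sdiff_add_sum_Icc {M : Type*} [AddCommMonoid M] (f : ℕ → M)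
    {m n : ℕ} (hmn : m ≤ n) {I : Finset ℕ} (hI : I ⊆ Icc 1 m) :
    ∑ i ∈ Icc 1 n, f i = ∑ i ∈ I, f i + ∑ i ∈ Icc 1 m \ I, f i + ∑ i ∈ Icc (m + 1) n, f i := by
  rw [add_comm (∑ i ∈ I, f i), sum_sdiff hI]
  simp only [Icc_add_one_left_eq_Ioc]
  exact (sum_Ioc_consecutive f (Nat.zero_le m) hmn).symm

section Infimum

variable {α ι : Type*} [ConditionallyCompleteLattice α] {f g : ι → α} {i₀ : ι}

lemma ciInf_eq_of_forall_ge (hmin : ∀ i, f i₀ ≤ f i) : ⨅ i, f i = f i₀ :=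
  have : Nonempty ι := ⟨i₀⟩
  le_antisymm (ciInf_le ⟨f i₀, Set.forall_mem_range.2 hmin⟩ i₀) (le_ciInf hmin)

lemma ciInf_eq_ciInf_of_le_of_eq_at_min (hle : ∀ i, f i ≤ g i) (hmin : ∀ i, f i₀ ≤ f i)
    (heq : g i₀ = f i₀) : ⨅ i, g i = ⨅ i, f i := by
  rw [ciInf_eq_of_forall_ge hmin, ← heq]
  exact ciInf_eq_of_forall_ge fun i => heq ▸ (hmin i).trans (hle i)

end Infimum

theorem zsigma_Iopt_eq_zopt_general {p n m : ℕ} (hmn : m ≤ n)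
    (X : ℕ → Fin p → ℝ) (Y : ℕ → ℝ)
    (hYpos : ∀ i, 1 ≤ i → i ≤ m → 0 < Y i)
    (F : (Fin p → ℝ) × ℝ → ℝ)
    (hF : ∀ b, F b =
      ∑ i ∈ Finset.Icc 1 n, (max 0 (∑ j, X i j * b.1 j + b.2) - Y i) ^ 2)
    (φ : (Fin p → ℝ) × ℝ → ℝ)
    (hφ : ∀ b, φ b =
      ∑ i ∈ Finset.Icc (m + 1) n, (max 0 (∑ j, X i j * b.1 j + b.2) - Y i) ^ 2)
    (fσ : Finset ℕ → (Fin p → ℝ) × ℝ → ℝ)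
    (hfσ : ∀ I b, fσ I b =
      ∑ i ∈ I, ((∑ j, X i j * b.1 j + b.2) - Y i) ^ 2
      + ∑ i ∈ Finset.Icc 1 m \ I, sigmaFn (∑ j, X i j * b.1 j + b.2) (Y i)
      + φ b)
    (βopt : Fin p → ℝ) (β₀opt : ℝ)
    (hmin : ∀ b : (Fin p → ℝ) × ℝ, F (βopt, β₀opt) ≤ F b)
    (Iopt : Finset ℕ)
    (hIopt : Iopt = (Finset.Icc 1 m).filter (fun i => 0 < ∑ j, X i j * βopt j + β₀opt)) :
    (⨅ b : (Fin p → ℝ) × ℝ, fσ Iopt b) = (⨅ b : (Fin p → ℝ) × ℝ, F b)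
    ∧ ∃ I : Finset ℕ, I ⊆ Finset.Icc 1 m ∧
        (⨅ b : (Fin p → ℝ) × ℝ, fσ I b) = ⨅ b : (Fin p → ℝ) × ℝ, F b := by
  have hIsub : Iopt ⊆ Icc 1 m := hIopt ▸ filter_subset _ _
  have hY : ∀ i ∈ Icc 1 m, 0 ≤ Y i := fun i hi => (hYpos i (mem_Icc.1 hi).1 (mem_Icc.1 hi).2).le
  have hFsplit : ∀ b, F b = ∑ i ∈ Iopt, (max 0 (∑ j, X i j * b.1 j + b.2) - Y i) ^ 2
      + ∑ i ∈ Icc 1 m \ Iopt, (max 0 (∑ j, X i j * b.1 j + b.2) - Y i) ^ 2 + φ b := fun b => by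
    rw [hF, hφ, sum_Icc_one_eq_sum_add_sum_sdiff_add_sum_Icc _ hmn hIsub]
  have hle : ∀ b, F b ≤ fσ Iopt b := fun b => by
    rw [hFsplit, hfσ]
    refine add_le_add (add_le_add (sum_le_sum fun i hi => ?_) (sum_le_sum fun i hi => ?_)) le_rfl
    · exact sq_max_zero_sub_le_sq_sub (hY i (hIsub hi))
    · exact sq_max_zero_sub_le_sigmaFn (hY i (mem_sdiff.1 hi).1)
  have heq : fσ Iopt (βopt, β₀opt) = F (βopt, β₀opt) := by
    rw [hFsplit, hfσ]
    congr 2 <;> refine sum_congr rfl fun i hi => ?_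
    · rw [hIopt, mem_filter] at hi
      rw [max_eq_right hi.2.le]
    · obtain ⟨hi, hi'⟩ := mem_sdiff.1 hi
      rw [hIopt, mem_filter, not_and, not_lt] at hi'
      exact sigmaFn_eq_sq_max_zero_sub_of_nonpos (hi' hi) (hY i hi)
  have hmain := ciInf_eq_ciInf_of_le_of_eq_at_min hle hmin heq
  exact ⟨hmain, Iopt, hIsub, hmain⟩

/-- If the infimum `z^OPT` is attained at some `(β^OPT, β₀^OPT)`, and
`I^OPT = {i ∈ {1,…,m} : X iᵀβ^OPT + β₀^OPT > 0}`, then `z^σ(I^OPT) = z^OPT`; in particular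
there exists `I ⊆ {1,…,m}` with `z^σ(I) = z^OPT`. -/
theorem zsigma_Iopt_eq_zopt {p n m : ℕ} (hp : 0 < p) (hn : 0 < n) (hmn : m ≤ n)
    (X : ℕ → Fin p → ℝ) (Y : ℕ → ℝ)
    (hYpos : ∀ i, 1 ≤ i → i ≤ m → 0 < Y i)
    (hYneg : ∀ i, m < i → i ≤ n → Y i ≤ 0)
    (F : (Fin p → ℝ) × ℝ → ℝ)
    (hF : ∀ b, F b =
      ∑ i ∈ Finset.Icc 1 n, (max 0 (∑ j, X i j * b.1 j + b.2) - Y i) ^ 2)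
    (φ : (Fin p → ℝ) × ℝ → ℝ)
    (hφ : ∀ b, φ b =
      ∑ i ∈ Finset.Icc (m + 1) n, (max 0 (∑ j, X i j * b.1 j + b.2) - Y i) ^ 2)
    (fσ : Finset ℕ → (Fin p → ℝ) × ℝ → ℝ)
    (hfσ : ∀ I b, fσ I b =
      ∑ i ∈ I, ((∑ j, X i j * b.1 j + b.2) - Y i) ^ 2
      + ∑ i ∈ Finset.Icc 1 m \ I, sigmaFn (∑ j, X i j * b.1 j + b.2) (Y i)
      + φ b)
    (βopt : Fin p → ℝ) (β₀opt : ℝ)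
    (hmin : ∀ b : (Fin p → ℝ) × ℝ, F (βopt, β₀opt) ≤ F b)
    (Iopt : Finset ℕ)
    (hIopt : Iopt = (Finset.Icc 1 m).filter (fun i => 0 < ∑ j, X i j * βopt j + β₀opt)) :
    (⨅ b : (Fin p → ℝ) × ℝ, fσ Iopt b) = (⨅ b : (Fin p → ℝ) × ℝ, F b)
    ∧ ∃ I : Finset ℕ, I ⊆ Finset.Icc 1 m ∧
        (⨅ b : (Fin p → ℝ) × ℝ, fσ I b) = ⨅ b : (Fin p → ℝ) × ℝ, F b :=
  zsigma_Iopt_eq_zopt_general hmn X Y hYpos F hF φ hφ fσ hfσ βopt β₀opt hmin Iopt hIopt
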